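/- For all integers n ≥ 0 and e with 0 ≤ e ≤ n(n−1)/2, there exists an almost alternating threshold graph on n vertices with exactly e edges. -/

import Mathlib

/-!
Common definitions: threshold graphs from binary codes, counts of matchings and
independent sets, lex and colex graphs, and almost alternating codes.

A binary code is a `List Bool` whose head is the *leftmost* (most significant,
last added) digit; `true` stands for the digit `1` and `false` for `0`.
Reading the code from right to left, each digit adds a vertex: a `1` adds a
dominating vertex and a `0` adds an isolated vertex.  Equivalently, the vertex
at position `i` (from the left) is adjacent to every vertex to its right iff
its digit is `1`.  Note that the value of the rightmost digit (the star) never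
affects the graph.
-/

/-- The threshold graph encoded by a binary code `σ`. -/
def threshOf (σ : List Bool) : SimpleGraph (Fin σ.length) where
  Adj i j := i ≠ j ∧ σ.get (min i j) = true
  symm := by
    constructor
    intro i j h
    refine ⟨h.1.symm, ?_⟩
    rw [min_comm]
    exact h.2
  loopless := by
    constructor
    intro i h
    exact h.1 rfl

/-- The number of edges of a graph. -/
noncomputable def edgeCount {V : Type*} (G : SimpleGraph V) : ℕ := Nat.card G.edgeSet

/-- `M` is a matching of `G`: a set of pairwise disjoint edges of `G`. -/
def IsMatchingSet {V : Type*} (G : SimpleGraph V) (M : Finset (Sym2 V)) : Prop :=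
  (∀ e ∈ M, e ∈ G.edgeSet) ∧ ∀ e ∈ M, ∀ f ∈ M, e ≠ f → ∀ v : V, v ∈ e → v ∉ f

/-- `m(G)`: the total number of matchings of `G` (including the empty matching). -/
noncomputable def matchCount {V : Type*} (G : SimpleGraph V) : ℕ :=
  Nat.card {M : Finset (Sym2 V) // IsMatchingSet G M}

/-- `m_k(G)`: the number of matchings of `G` of size `k`. -/
noncomputable def matchCountK {V : Type*} (G : SimpleGraph V) (k : ℕ) : ℕ :=
  Nat.card {M : Finset (Sym2 V) // IsMatchingSet G M ∧ M.card = k}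

/-- `i(G)`: the number of independent sets of `G` (including the empty set). -/
noncomputable def indCount {V : Type*} (G : SimpleGraph V) : ℕ :=
  Nat.card {S : Finset V // ∀ u ∈ S, ∀ v ∈ S, ¬ G.Adj u v}

/-- `i_k(G)`: the number of independent sets of `G` of size `k`. -/
noncomputable def indCountK {V : Type*} (G : SimpleGraph V) (k : ℕ) : ℕ :=
  Nat.card {S : Finset V // (∀ u ∈ S, ∀ v ∈ S, ¬ G.Adj u v) ∧ S.card = k}

/-- Two codes encode the same threshold graph: they have the same length and agree
except possibly in the rightmost (starred) digit. -/
def CodeEquiv (σ τ : List Bool) : Prop := σ.length = τ.length ∧ σ.dropLast = τ.dropLast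

/-- Words that are concatenations of copies of the letters `a = 01` and `b = 10`. -/
inductive IsABWord : List Bool → Prop
  | nil : IsABWord []
  | a {w : List Bool} : IsABWord w → IsABWord (false :: true :: w)
  | b {w : List Bool} : IsABWord w → IsABWord (true :: false :: w)

/-- `w` is a concatenation of `α` copies of the letter `a = 01` and `β` copies of the
letter `b = 10`, in some order. -/
def IsABWordWith (α β : ℕ) (w : List Bool) : Prop :=
  ∃ ls : List (List Bool), (∀ x ∈ ls, x = [false, true] ∨ x = [true, false]) ∧
    ls.count [false, true] = α ∧ ls.count [true, false] = β ∧ w = ls.flatten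

/-- A code is almost alternating if (possibly after reinterpreting the starred rightmost
digit) it is an initial constant block followed by a word in the letters `a = 01` and
`b = 10`, either using the rightmost digit as the final digit of the last letter
(unstarred case) or keeping the rightmost digit separate after the word (starred case). -/
def IsAlmostAltCode (σ : List Bool) : Prop :=
  ∃ τ : List Bool, CodeEquiv σ τ ∧
    ∃ (t : ℕ) (c : Bool) (w : List Bool), IsABWord w ∧
      (τ = List.replicate t c ++ w ∨ ∃ d : Bool, τ = List.replicate t c ++ w ++ [d])

/-- A small almost alternating code: the initial block consists of `0`'s (or is empty). -/
def IsSmallAACode (σ : List Bool) : Prop :=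
  ∃ τ : List Bool, CodeEquiv σ τ ∧
    ∃ (t : ℕ) (w : List Bool), IsABWord w ∧
      (τ = List.replicate t false ++ w ∨ ∃ d : Bool, τ = List.replicate t false ++ w ++ [d])

/-- A large almost alternating code: the initial block is a nonempty block of `1`'s. -/
def IsLargeAACode (σ : List Bool) : Prop :=
  ∃ τ : List Bool, CodeEquiv σ τ ∧
    ∃ (t : ℕ) (w : List Bool), 1 ≤ t ∧ IsABWord w ∧
      (τ = List.replicate t true ++ w ∨ ∃ d : Bool, τ = List.replicate t true ++ w ++ [d])

/-- A code has a bracketed string if (possibly after reinterpreting the starred rightmost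
digit) it contains a substring `1 0^j 1` or `0 1^j 0` with `j ≥ 3`. -/
def HasBracketedString (σ : List Bool) : Prop :=
  ∃ τ : List Bool, CodeEquiv σ τ ∧ ∃ (x y : List Bool) (j : ℕ), 3 ≤ j ∧
    (τ = x ++ [true] ++ List.replicate j false ++ [true] ++ y ∨
     τ = x ++ [false] ++ List.replicate j true ++ [false] ++ y)

/-- A code has a separation issue if it contains two pairs of repeated digits separated by
a substring of odd length, where the first pair is immediately preceded by the opposite
digit and the second pair is followed by at least one further digit. -/
def HasSeparationIssue (σ : List Bool) : Prop :=
  ∃ (x m y : List Bool) (d c : Bool),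
    Odd m.length ∧ y ≠ [] ∧ σ = x ++ [!d, d, d] ++ m ++ [c, c] ++ y

/-- The colex graph `C(n,e)`: the graph on `Fin n` whose edges are the first `e` pairs in
the colexicographic order.  The pair `{i, j}` with `i < j` has rank `j(j-1)/2 + i` in
this order. -/
def colexGraph (n e : ℕ) : SimpleGraph (Fin n) where
  Adj i j := i ≠ j ∧ max i.val j.val * (max i.val j.val - 1) / 2 + min i.val j.val < e
  symm := by
    constructor
    intro i j h
    refine ⟨h.1.symm, ?_⟩
    rw [max_comm j.val i.val, min_comm j.val i.val]
    exact h.2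
  loopless := by
    constructor
    intro i h
    exact h.1 rfl

/-- The lex graph `L(n,e)`: the graph on `Fin n` whose edges are the first `e` pairs in
the lexicographic order.  The pair `{i, j}` with `i < j` has rank
`i(n-1) - i(i-1)/2 + (j - i - 1)` in this order. -/
def lexGraph (n e : ℕ) : SimpleGraph (Fin n) where
  Adj i j := i ≠ j ∧
    min i.val j.val * (n - 1) - min i.val j.val * (min i.val j.val - 1) / 2
      + (max i.val j.val - min i.val j.val - 1) < e
  symm := by
    constructor
    intro i j h
    refine ⟨h.1.symm, ?_⟩
    rw [max_comm j.val i.val, min_comm j.val i.val]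
    exact h.2
  loopless := by
    constructor
    intro i h
    exact h.1 rfl


/-!
Reading a code from the left, each `1` is joined to every vertex to its right, so the number of
edges is the weight `∑_{σᵢ = 1} (number of digits right of i)`.  A word of `j` letters `b = 10`
and `k` letters `a = 01` has weight `(j + k)(j + k - 1) + j`, and a starred digit after it adds
`j + k`.  Hence for `m = ⌊√s⌋` the weight `s` is reached by `m` letters and a star when
`s ≤ m² + m`, and by `m + 1` letters otherwise; in both cases the word has length at most `n`
as soon as `4s ≤ n(n - 1)`, and leading `0`s pad it to length `n` without changing the weight.
Complementing every digit turns weight `s` into `n(n - 1)/2 - s` and keeps a code almost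
alternating, which covers the upper half of the edge range.
-/

def codeWeight : List Bool → ℕ
  | [] => 0
  | b :: s => (if b then s.length else 0) + codeWeight s

lemma codeWeight_eq_sum (σ : List Bool) :
    codeWeight σ = ∑ i : Fin σ.length, if σ.get i then σ.length - 1 - i.val else 0 := by
  induction σ with
  | nil => rfl
  | cons b s ih =>
    rw [codeWeight, ih]
    simp only [List.length_cons, Fin.sum_univ_succ]
    have hshift : ∀ i : Fin s.length, s.length - 1 - i.val = s.length + 1 - 1 - (i.val + 1) :=
      fun i => by omega
    simp [hshift]

lemma threshOf_adj_of_lt {σ : List Bool} {i j : Fin σ.length} (h : i < j) :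
    (threshOf σ).Adj i j ↔ σ.get i = true := by
  simp [threshOf, h.ne, min_eq_left (show i.val ≤ j.val from h.le), List.get_eq_getElem]

lemma edgeCount_threshOf (σ : List Bool) : edgeCount (threshOf σ) = codeWeight σ := by
  classical
  let toEdge (p : {p : Fin σ.length × Fin σ.length // p.1 < p.2 ∧ σ.get p.1 = true}) :
      (threshOf σ).edgeSet :=
    ⟨s(p.1.1, p.1.2), (threshOf_adj_of_lt p.2.1).2 p.2.2⟩
  have hbij : Function.Bijective toEdge := by
    constructor
    · rintro ⟨⟨i, j⟩, hij, _⟩ ⟨⟨i', j'⟩, hij', _⟩ hpair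
      have hsym : s(i, j) = s(i', j') := congrArg Subtype.val hpair
      rcases Sym2.eq_iff.1 hsym with ⟨rfl, rfl⟩ | ⟨rfl, rfl⟩
      · rfl
      · exact absurd hij' hij.not_gt
    · rintro ⟨e, he⟩
      induction e using Sym2.ind with
      | _ i j =>
        rcases lt_or_gt_of_ne ((threshOf σ).ne_of_adj he) with h | h
        · exact ⟨⟨(i, j), h, (threshOf_adj_of_lt h).1 he⟩, rfl⟩
        · exact ⟨⟨(j, i), h, (threshOf_adj_of_lt h).1 he.symm⟩, Subtype.ext Sym2.eq_swap⟩
  rw [edgeCount, ← Nat.card_eq_of_bijective _ hbij, Nat.card_eq_fintype_card,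
    Fintype.card_subtype, codeWeight_eq_sum, ← Finset.univ_product_univ, Finset.card_filter,
    Finset.sum_product]
  refine Finset.sum_congr rfl fun i _ => ?_
  by_cases hi : σ.get i = true
  · simp only [hi, and_true, if_true, ← Finset.card_filter, Finset.filter_lt_eq_Ioi, Fin.card_Ioi]
  · rw [List.get_eq_getElem] at hi
    simp [hi]

lemma codeWeight_append (x y : List Bool) :
    codeWeight (x ++ y) = codeWeight x + x.count true * y.length + codeWeight y := by
  induction x with
  | nil => simp [codeWeight]
  | cons b s ih =>
    cases b
    · simp [codeWeight, ih]
    · simp [codeWeight, ih]; ring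

lemma codeWeight_replicate_false_append (t : ℕ) (x : List Bool) :
    codeWeight (List.replicate t false ++ x) = codeWeight x := by
  induction t with
  | zero => rfl
  | succ t ih => simp [List.replicate_succ, codeWeight, ih]

lemma codeWeight_map_not_add (σ : List Bool) :
    codeWeight (σ.map not) + codeWeight σ = σ.length.choose 2 := by
  induction σ with
  | nil => rfl
  | cons b s ih =>
    rw [List.length_cons, Nat.choose_succ_succ', Nat.choose_one_right, ← ih]
    cases b <;> simp [codeWeight] <;> omega

def abWord : ℕ → ℕ → List Bool
  | 0, 0 => []
  | 0, k + 1 => false :: true :: abWord 0 k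
  | j + 1, k => true :: false :: abWord j k

lemma isABWord_abWord (j k : ℕ) : IsABWord (abWord j k) := by
  induction j, k using abWord.induct with
  | case1 => simpa [abWord] using IsABWord.nil
  | case2 k ih => simpa [abWord] using ih.a
  | case3 j k ih => simpa [abWord] using ih.b

lemma length_abWord (j k : ℕ) : (abWord j k).length = 2 * (j + k) := by
  induction j, k using abWord.induct <;> simp [abWord, *]
  all_goals omega

lemma count_true_abWord (j k : ℕ) : (abWord j k).count true = j + k := by
  induction j, k using abWord.induct <;> simp [abWord, *]
  all_goals omega

lemma codeWeight_abWord_add (j k : ℕ) :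
    codeWeight (abWord j k) + (j + k) = (j + k) ^ 2 + j := by
  induction j, k using abWord.induct with
  | case1 => simp [abWord, codeWeight]
  | case2 k ih =>
    simp only [abWord, codeWeight, length_abWord, Bool.false_eq_true, ↓reduceIte]
    nlinarith
  | case3 j k ih =>
    simp only [abWord, codeWeight, List.length_cons, length_abWord, Bool.false_eq_true, ↓reduceIte]
    nlinarith

lemma codeWeight_abWord_append_false (j k : ℕ) :
    codeWeight (abWord j k ++ [false]) = (j + k) ^ 2 + j := by
  rw [codeWeight_append, count_true_abWord, ← codeWeight_abWord_add]
  simp [codeWeight]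

lemma IsABWord.map_not {w : List Bool} (h : IsABWord w) : IsABWord (w.map not) := by
  induction h with
  | nil => exact .nil
  | a _ ih => exact .b ih
  | b _ ih => exact .a ih

lemma IsAlmostAltCode.map_not {σ : List Bool} (h : IsAlmostAltCode σ) :
    IsAlmostAltCode (σ.map not) := by
  obtain ⟨τ, ⟨hlen, hdrop⟩, t, c, w, hw, hτ⟩ := h
  refine ⟨τ.map not, ⟨by simp [hlen], by rw [← List.map_dropLast, ← List.map_dropLast, hdrop]⟩,
    t, !c, w.map not, hw.map_not, ?_⟩
  rcases hτ with rfl | ⟨d, rfl⟩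
  · simp
  · exact .inr ⟨!d, by simp⟩

lemma IsSmallAACode.isAlmostAltCode {σ : List Bool} (h : IsSmallAACode σ) :
    IsAlmostAltCode σ :=
  let ⟨τ, hστ, t, w, hw, hτ⟩ := h
  ⟨τ, hστ, t, false, w, hw, hτ⟩

lemma isSmallAACode_replicate_append (t : ℕ) {w tail : List Bool} (hw : IsABWord w)
    (htail : tail = [] ∨ ∃ d, tail = [d]) :
    IsSmallAACode (List.replicate t false ++ w ++ tail) := by
  refine ⟨_, ⟨rfl, rfl⟩, t, w, hw, ?_⟩
  rcases htail with rfl | ⟨d, rfl⟩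
  · exact .inl (List.append_nil _)
  · exact .inr ⟨d, rfl⟩

lemma lt_of_mul_pred_lt_mul_pred {a n : ℕ} (h : a * (a - 1) < n * (n - 1)) : a < n := by
  by_contra! han
  exact h.not_ge (Nat.mul_le_mul han (Nat.sub_le_sub_right han 1))

lemma exists_abWord_codeWeight_eq {n s : ℕ} (hs : 4 * s ≤ n * (n - 1)) :
    ∃ (j k : ℕ) (tail : List Bool), (tail = [] ∨ tail = [false]) ∧
      (abWord j k ++ tail).length ≤ n ∧ codeWeight (abWord j k ++ tail) = s := by
  rcases Nat.eq_zero_or_pos s with rfl | hs0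
  · exact ⟨0, 0, [], .inl rfl, by simp [abWord], by simp [abWord, codeWeight]⟩
  obtain ⟨m, hm_le, hlt_m⟩ : ∃ m, m ^ 2 ≤ s ∧ s < (m + 1) ^ 2 :=
    ⟨Nat.sqrt s, Nat.sqrt_le' s, Nat.lt_succ_sqrt' s⟩
  by_cases hstar : s ≤ m ^ 2 + m
  · obtain ⟨j, hj⟩ : ∃ j, s = m ^ 2 + j := ⟨s - m ^ 2, by omega⟩
    obtain ⟨p, rfl⟩ : ∃ p, m = p + 1 :=
      Nat.exists_eq_succ_of_ne_zero fun h => by simp only [h, zero_add, one_pow] at hlt_m; omega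
    refine ⟨j, p + 1 - j, [false], .inr rfl, ?_, ?_⟩
    · rw [List.length_append, length_abWord, show j + (p + 1 - j) = p + 1 by omega]
      apply lt_of_mul_pred_lt_mul_pred
      rw [show 2 * (p + 1) - 1 = 2 * p + 1 by omega]
      nlinarith
    · rw [codeWeight_abWord_append_false, show j + (p + 1 - j) = p + 1 by omega, hj]
  · obtain ⟨j, hj⟩ : ∃ j, s = m ^ 2 + m + j := ⟨s - (m ^ 2 + m), by omega⟩
    have hjk : j + (m + 1 - j) = m + 1 := by
      have : j ≤ m + 1 := by nlinarith
      omega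
    refine ⟨j, m + 1 - j, [], .inl rfl, ?_, ?_⟩ <;> rw [List.append_nil]
    · rw [length_abWord, hjk]
      suffices 2 * m + 1 < n by omega
      apply lt_of_mul_pred_lt_mul_pred
      rw [Nat.add_sub_cancel]
      nlinarith
    · have := codeWeight_abWord_add j (m + 1 - j)
      rw [hjk] at this
      nlinarith

lemma exists_isSmallAACode_codeWeight_eq {n s : ℕ} (hs : 4 * s ≤ n * (n - 1)) :
    ∃ σ : List Bool, σ.length = n ∧ IsSmallAACode σ ∧ codeWeight σ = s := by
  obtain ⟨j, k, tail, htail, hlen, hw⟩ := exists_abWord_codeWeight_eq hs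
  refine ⟨List.replicate (n - (abWord j k ++ tail).length) false ++ (abWord j k ++ tail),
    by simp only [List.length_append, List.length_replicate] at hlen ⊢; omega, ?_,
    by rw [codeWeight_replicate_false_append, hw]⟩
  rw [← List.append_assoc]
  exact isSmallAACode_replicate_append _ (isABWord_abWord j k) (htail.imp id (⟨false, ·⟩))

/-- For all `n ≥ 0` and `0 ≤ e ≤ n(n−1)/2`, there exists an almost
alternating threshold graph on `n` vertices with exactly `e` edges. -/
theorem almost_alternating_exists (n e : ℕ) (he : e ≤ n * (n - 1) / 2) :
    ∃ σ : List Bool, σ.length = n ∧ IsAlmostAltCode σ ∧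
      edgeCount (threshOf σ) = e := by
  have hchoose : 2 * n.choose 2 = n * (n - 1) := by
    rw [Nat.choose_two_right]; exact Nat.mul_div_cancel' (Nat.even_mul_pred_self n).two_dvd
  rw [← Nat.choose_two_right] at he
  rcases le_total (2 * e) (n.choose 2) with hsmall | hlarge
  · obtain ⟨σ, hlen, hσ, hw⟩ := exists_isSmallAACode_codeWeight_eq (n := n) (s := e) (by omega)
    exact ⟨σ, hlen, hσ.isAlmostAltCode, by rw [edgeCount_threshOf, hw]⟩
  · obtain ⟨σ, hlen, hσ, hw⟩ :=
      exists_isSmallAACode_codeWeight_eq (n := n) (s := n.choose 2 - e) (by omega)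
    refine ⟨σ.map not, by rw [List.length_map, hlen], hσ.isAlmostAltCode.map_not, ?_⟩
    have hcompl := codeWeight_map_not_add σ
    rw [hlen, hw] at hcompl
    rw [edgeCount_threshOf]
    omega
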